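/- arXiv:1806.07572 — 4 statements merged into one kernel-verified Lean document; each statement's English description precedes it below -/
import Mathlib

section
/- Theorem 3 (Schoenberg–Gneiting criterion for strict positive definiteness on spheres). Let f:[−1,1]→ℝ be given by f(ρ)=Σ_{n=0}^∞ b_n ρ^n with b_n ≥ 0 for all n and Σ_{n=0}^∞ b_n < ∞. Then the kernel K_f^{(n₀)}(x,x') = f(xᵀx') on the unit sphere S^{n₀−1}={x∈ℝ^{n₀} : xᵀx=1} is positive definite for every n₀ ≥ 1 if and only if b_n > 0 for infinitely many even integers n and for infinitely many odd integers n. -/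
/-!
Write `Gₙ(c) = ∑ᵢⱼ cᵢ cⱼ (zᵢ ⬝ zⱼ)ⁿ = ‖∑ᵢ cᵢ zᵢ^{⊗n}‖²`, so the kernel form is `∑ₙ bₙ Gₙ(c)` with
`Gₙ(c) ≥ 0`.

Sufficiency: for distinct unit vectors, `zᵢ ⬝ zⱼ = 1` only on the diagonal, so the even and odd
subsequences of `Gₙ(c)` converge to limits adding up to `2 ∑ᵢ cᵢ² > 0`. One of them is positive,
and a positive `bₙ` of that parity then gives a positive term.

Necessity: if, say, `bₙ = 0` for all large even `n`, then `f(t) + f(-t)` is a polynomial of degree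
`< N`. Choose more points `xᵢ` on the circle than the dimension of `⨁_{n<N} (ℝ²)^{⊗n}` and `c ≠ 0`
with `∑ᵢ cᵢ xᵢ^{⊗n} = 0` for `n < N`. On the configuration `{xᵢ} ∪ {-xᵢ}` with weights `(c, c)`
the form is `2 ∑ᵢⱼ cᵢ cⱼ (f + f(-·))(xᵢ ⬝ xⱼ) = 0`. The odd case uses the weights `(c, -c)`.
-/

open Finset Filter Topology

section GramPowerForm

variable {ι κ : Type*} [Fintype ι] [Fintype κ]

def gramPowerForm (c : ι → ℝ) (z : ι → κ → ℝ) (n : ℕ) : ℝ :=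
  ∑ i, ∑ j, c i * c j * (z i ⬝ᵥ z j) ^ n

theorem dotProduct_pow_eq_sum_prod_mul_prod (x y : κ → ℝ) (n : ℕ) :
    (x ⬝ᵥ y) ^ n = ∑ k : Fin n → κ, (∏ s, x (k s)) * ∏ s, y (k s) := by
  classical
  rw [dotProduct, sum_pow', Fintype.piFinset_univ]
  simp only [prod_mul_distrib]

theorem gramPowerForm_eq_sum_sq (c : ι → ℝ) (z : ι → κ → ℝ) (n : ℕ) :
    gramPowerForm c z n = ∑ k : Fin n → κ, (∑ i, c i * ∏ s, z i (k s)) ^ 2 := by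
  simp_rw [gramPowerForm, dotProduct_pow_eq_sum_prod_mul_prod, sq, sum_mul_sum, mul_sum]
  calc _ = ∑ i, ∑ k : Fin n → κ, ∑ j, c i * c j * ((∏ s, z i (k s)) * ∏ s, z j (k s)) :=
        sum_congr rfl fun i _ => sum_comm
    _ = _ := by
      rw [sum_comm]
      exact sum_congr rfl fun k _ => sum_congr rfl fun i _ => sum_congr rfl fun j _ => by ring

theorem gramPowerForm_nonneg (c : ι → ℝ) (z : ι → κ → ℝ) (n : ℕ) : 0 ≤ gramPowerForm c z n := by
  rw [gramPowerForm_eq_sum_sq]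
  positivity

theorem exists_ne_zero_sum_mul_prod_eq_zero (x : ι → κ → ℝ) (N : ℕ)
    (hN : ∑ n ∈ range N, Fintype.card κ ^ n < Fintype.card ι) :
    ∃ c : ι → ℝ, c ≠ 0 ∧ ∀ n < N, ∀ k : Fin n → κ, ∑ i, c i * ∏ s, x i (k s) = 0 := by
  let M : Matrix (Σ n : Fin N, Fin n → κ) ι ℝ := fun p i => ∏ s, x i (p.2 s)
  have hdim : Module.finrank ℝ ((Σ n : Fin N, Fin n → κ) → ℝ) < Module.finrank ℝ (ι → ℝ) := by
    simpa [Fintype.card_sigma, Fin.sum_univ_eq_sum_range (fun n => Fintype.card κ ^ n)] using hN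
  obtain ⟨c, hc, hc0⟩ := (Submodule.ne_bot_iff _).1 (LinearMap.ker_ne_bot_of_finrank_lt
    (f := M.mulVecLin) hdim)
  refine ⟨c, hc0, fun n hn k => ?_⟩
  rw [LinearMap.mem_ker, Matrix.mulVecLin_apply] at hc
  simpa [M, Matrix.mulVec, dotProduct, mul_comm] using congrFun hc ⟨⟨n, hn⟩, k⟩

theorem exists_ne_zero_gramPowerForm_eq_zero (x : ι → κ → ℝ) (N : ℕ)
    (hN : ∑ n ∈ range N, Fintype.card κ ^ n < Fintype.card ι) :
    ∃ c : ι → ℝ, c ≠ 0 ∧ ∀ n < N, gramPowerForm c x n = 0 := by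
  obtain ⟨c, hc0, hc⟩ := exists_ne_zero_sum_mul_prod_eq_zero x N hN
  refine ⟨c, hc0, fun n hn => ?_⟩
  rw [gramPowerForm_eq_sum_sq]
  exact sum_eq_zero fun k _ => by rw [hc n hn k, sq, zero_mul]

theorem hasSum_mul_gramPowerForm {b : ℕ → ℝ} (c : ι → ℝ) {z : ι → κ → ℝ} {K : ι → ι → ℝ}
    (hK : ∀ i j, HasSum (fun n => b n * (z i ⬝ᵥ z j) ^ n) (K i j)) :
    HasSum (fun n => b n * gramPowerForm c z n) (∑ i, ∑ j, c i * c j * K i j) := by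
  refine (hasSum_sum fun i _ => hasSum_sum fun j _ => (hK i j).mul_left (c i * c j)).congr_fun
    fun n => ?_
  simp only [gramPowerForm, mul_sum]
  exact sum_congr rfl fun i _ => sum_congr rfl fun j _ => by ring

end GramPowerForm

section UnitVectors

variable {κ : Type*} [Fintype κ] {x y : κ → ℝ}

theorem abs_dotProduct_le_one (hx : x ⬝ᵥ x = 1) (hy : y ⬝ᵥ y = 1) : |x ⬝ᵥ y| ≤ 1 := by
  have hcs := sum_mul_sq_le_sq_mul_sq univ x y
  simp only [dotProduct, ← sq] at hx hy hcs ⊢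
  rw [hx, hy, one_mul] at hcs
  exact (sq_le_one_iff_abs_le_one _).1 hcs

theorem eq_of_dotProduct_eq_one (hx : x ⬝ᵥ x = 1) (hy : y ⬝ᵥ y = 1) (hxy : x ⬝ᵥ y = 1) :
    x = y := by
  have h : (x - y) ⬝ᵥ (x - y) = 0 := by
    simp only [sub_dotProduct, dotProduct_sub, dotProduct_comm y x, hx, hy, hxy]
    norm_num
  exact sub_eq_zero.1 (dotProduct_self_eq_zero.1 h)

end UnitVectors

theorem tendsto_pow_two_mul {t : ℝ} (ht : |t| ≤ 1) :
    Tendsto (fun k : ℕ => t ^ (2 * k)) atTop (𝓝 (if |t| = 1 then 1 else 0)) := by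
  simp_rw [pow_mul]
  rcases ht.lt_or_eq with ht | ht
  · rw [if_neg ht.ne]
    exact tendsto_pow_atTop_nhds_zero_of_abs_lt_one (by rw [abs_pow]; nlinarith [abs_nonneg t])
  · rw [if_pos ht, ← sq_abs, ht, one_pow]
    simp only [one_pow, tendsto_const_nhds]

theorem tendsto_pow_two_mul_mul_one_add {t : ℝ} (ht : |t| ≤ 1) :
    Tendsto (fun k : ℕ => t ^ (2 * k) * (1 + t)) atTop (𝓝 (if t = 1 then 2 else 0)) := by
  convert (tendsto_pow_two_mul ht).mul_const (1 + t) using 2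
  by_cases h1 : t = 1
  · norm_num [h1]
  by_cases h2 : t = -1
  · norm_num [h2]
  have h : |t| ≠ 1 := by rw [Ne, abs_eq zero_le_one]; tauto
  simp [h1, h]

theorem summable_mul_pow {b : ℕ → ℝ} (hb : Summable b) {t : ℝ} (ht : |t| ≤ 1) :
    Summable fun n => b n * t ^ n :=
  hb.abs.of_norm_bounded fun n => by
    rw [norm_mul, norm_pow, Real.norm_eq_abs, Real.norm_eq_abs]
    exact mul_le_of_le_one_right (abs_nonneg _) (pow_le_one₀ (abs_nonneg _) ht)

theorem exists_and_of_infinite_even {p r : ℕ → Prop} (hp : {n | Even n ∧ p n}.Infinite)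
    (hr : ∀ᶠ k in atTop, r (2 * k)) : ∃ n, p n ∧ r n := by
  obtain ⟨K, hK⟩ := eventually_atTop.1 hr
  obtain ⟨_, ⟨⟨k, rfl⟩, hpk⟩, hkK⟩ := hp.exists_gt (2 * K)
  exact ⟨k + k, hpk, two_mul k ▸ hK k (by omega)⟩

theorem exists_and_of_infinite_odd {p r : ℕ → Prop} (hp : {n | Odd n ∧ p n}.Infinite)
    (hr : ∀ᶠ k in atTop, r (2 * k + 1)) : ∃ n, p n ∧ r n := by
  obtain ⟨K, hK⟩ := eventually_atTop.1 hr
  obtain ⟨_, ⟨⟨k, rfl⟩, hpk⟩, hkK⟩ := hp.exists_gt (2 * K)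
  exact ⟨2 * k + 1, hpk, hK k (by omega)⟩

section Sufficiency

variable {ι κ : Type*} [Fintype ι] [Fintype κ] {z : ι → κ → ℝ}

theorem tendsto_gramPowerForm_two_mul_add_two_mul_add_one (hz : ∀ i, z i ⬝ᵥ z i = 1)
    (hinj : Function.Injective z) (c : ι → ℝ) :
    Tendsto (fun k => gramPowerForm c z (2 * k) + gramPowerForm c z (2 * k + 1)) atTop
      (𝓝 (2 * (c ⬝ᵥ c))) := by
  classical
  have hdiag (i j : ι) : z i ⬝ᵥ z j = 1 ↔ i = j :=
    ⟨fun h => hinj (eq_of_dotProduct_eq_one (hz i) (hz j) h), fun h => h ▸ hz i⟩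
  have hform : (fun k => gramPowerForm c z (2 * k) + gramPowerForm c z (2 * k + 1))
      = fun k => ∑ i, ∑ j, c i * c j * ((z i ⬝ᵥ z j) ^ (2 * k) * (1 + z i ⬝ᵥ z j)) := by
    funext k
    simp only [gramPowerForm, ← sum_add_distrib]
    exact sum_congr rfl fun i _ => sum_congr rfl fun j _ => by ring
  have hlim : ∑ i, ∑ j, c i * c j * (if z i ⬝ᵥ z j = 1 then 2 else 0) = 2 * (c ⬝ᵥ c) := by
    simp only [hdiag, mul_ite, mul_zero, sum_ite_eq, mem_univ, if_true]
    rw [dotProduct, mul_sum]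
    exact sum_congr rfl fun i _ => by ring
  rw [hform, ← hlim]
  exact tendsto_finsetSum univ fun i _ => tendsto_finsetSum univ fun j _ =>
    (tendsto_pow_two_mul_mul_one_add (abs_dotProduct_le_one (hz i) (hz j))).const_mul (c i * c j)

theorem eventually_pos_gramPowerForm_even_or_odd (hz : ∀ i, z i ⬝ᵥ z i = 1)
    (hinj : Function.Injective z) {c : ι → ℝ} (hc : c ≠ 0) :
    (∀ᶠ k in atTop, 0 < gramPowerForm c z (2 * k)) ∨
      ∀ᶠ k in atTop, 0 < gramPowerForm c z (2 * k + 1) := by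
  have habs (i j : ι) : |z i ⬝ᵥ z j| ≤ 1 := abs_dotProduct_le_one (hz i) (hz j)
  obtain ⟨Le, hLe⟩ : ∃ Le, Tendsto (fun k => gramPowerForm c z (2 * k)) atTop (𝓝 Le) :=
    ⟨_, tendsto_finsetSum _ fun i _ => tendsto_finsetSum _ fun j _ =>
      (tendsto_pow_two_mul (habs i j)).const_mul _⟩
  obtain ⟨Lo, hLo⟩ : ∃ Lo, Tendsto (fun k => gramPowerForm c z (2 * k + 1)) atTop (𝓝 Lo) :=
    ⟨_, tendsto_finsetSum _ fun i _ => tendsto_finsetSum _ fun j _ => by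
      simpa only [pow_succ] using ((tendsto_pow_two_mul (habs i j)).mul_const _).const_mul _⟩
  have hpos : 0 < Le + Lo := by
    rw [tendsto_nhds_unique (hLe.add hLo)
      (tendsto_gramPowerForm_two_mul_add_two_mul_add_one hz hinj c)]
    have hcc : 0 < c ⬝ᵥ c := (Fintype.sum_nonneg fun i => mul_self_nonneg (c i)).lt_of_ne'
      (dotProduct_self_eq_zero.not.2 hc)
    positivity
  rcases lt_or_ge 0 Le with h | h
  · exact Or.inl (hLe.eventually_const_lt h)
  · exact Or.inr (hLo.eventually_const_lt (by linarith))

theorem sum_sum_mul_mul_tsum_pos {b : ℕ → ℝ} (hb : ∀ n, 0 ≤ b n) (hsum : Summable b)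
    (heven : {n | Even n ∧ 0 < b n}.Infinite) (hodd : {n | Odd n ∧ 0 < b n}.Infinite)
    (hz : ∀ i, z i ⬝ᵥ z i = 1) (hinj : Function.Injective z) {c : ι → ℝ} (hc : c ≠ 0) :
    0 < ∑ i, ∑ j, c i * c j * ∑' n, b n * (z i ⬝ᵥ z j) ^ n := by
  have hK := hasSum_mul_gramPowerForm c fun i j =>
    (summable_mul_pow hsum (abs_dotProduct_le_one (hz i) (hz j))).hasSum
  obtain ⟨n, hbn, hn⟩ : ∃ n, 0 < b n ∧ 0 < gramPowerForm c z n := by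
    rcases eventually_pos_gramPowerForm_even_or_odd hz hinj hc with h | h
    · exact exists_and_of_infinite_even heven h
    · exact exists_and_of_infinite_odd hodd h
  rw [← hK.tsum_eq]
  exact hK.summable.tsum_pos (fun n => mul_nonneg (hb n) (gramPowerForm_nonneg c z n)) n
    (mul_pos hbn hn)

end Sufficiency

theorem exists_injective_unit_fin_two (m : ℕ) :
    ∃ x : Fin m → Fin 2 → ℝ, Function.Injective x ∧ (∀ i, x i ⬝ᵥ x i = 1) ∧ ∀ i, 0 < x i 0 := by
  set a : Fin m → ℝ := fun i => ((i : ℝ) + 2)⁻¹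
  have ha_pos (i : Fin m) : 0 < a i := by positivity
  have ha_sq (i : Fin m) : a i ^ 2 ≤ 1 := by
    rw [sq_le_one_iff_abs_le_one, abs_of_pos (ha_pos i)]
    exact inv_le_one_of_one_le₀ (by linarith [(i : ℕ).cast_nonneg (α := ℝ)])
  refine ⟨fun i => ![a i, √(1 - a i ^ 2)], fun i j h => ?_, fun i => ?_, ha_pos⟩
  · have h0 := congrFun h 0
    simp only [a, Matrix.cons_val_zero, inv_inj, add_left_inj, Nat.cast_inj] at h0
    exact Fin.ext h0
  · rw [dotProduct, Fin.sum_univ_two]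
    simp [← sq, Real.sq_sqrt (sub_nonneg.2 (ha_sq i))]

section Necessity

variable {κ : Type*} {m : ℕ}

theorem injective_append_neg {x : Fin m → κ → ℝ} (hinj : Function.Injective x) (l : κ)
    (hpos : ∀ i, 0 < x i l) : Function.Injective (Fin.append x (-x)) := by
  refine Fin.append_injective_iff.2 ⟨hinj, neg_injective.comp hinj, fun i j h => ?_⟩
  have := congrFun h l
  simp only [Pi.neg_apply] at this
  linarith [hpos i, hpos j]

theorem append_neg_dotProduct_self [Fintype κ] {x : Fin m → κ → ℝ} (hx : ∀ i, x i ⬝ᵥ x i = 1)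
    (p : Fin (m + m)) : Fin.append x (-x) p ⬝ᵥ Fin.append x (-x) p = 1 :=
  Fin.addCases (fun i => by rw [Fin.append_left, hx i])
    (fun i => by
      rw [Fin.append_right, Pi.neg_apply, neg_dotProduct, dotProduct_neg, neg_neg, hx i]) p

theorem sum_sum_append_neg [Fintype κ] (x : Fin m → κ → ℝ) (c : Fin m → ℝ) {ε : ℝ}
    (hε : ε ^ 2 = 1) (F : ℝ → ℝ) :
    ∑ p, ∑ q, Fin.append c (ε • c) p * Fin.append c (ε • c) q *
        F (Fin.append x (-x) p ⬝ᵥ Fin.append x (-x) q)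
      = 2 * ∑ i, ∑ j, c i * c j * (F (x i ⬝ᵥ x j) + ε * F (-(x i ⬝ᵥ x j))) := by
  simp only [Fin.sum_univ_add, Fin.append_left, Fin.append_right, Pi.neg_apply, neg_dotProduct,
    dotProduct_neg, neg_neg, Pi.smul_apply, smul_eq_mul, mul_sum, ← sum_add_distrib]
  exact sum_congr rfl fun i _ => sum_congr rfl fun j _ => by
    linear_combination c i * c j * F (x i ⬝ᵥ x j) * hε

theorem exists_sum_sum_mul_mul_tsum_eq_zero {b : ℕ → ℝ} (hsum : Summable b) {ε : ℝ}
    (hε : ε ^ 2 = 1) (hvan : ∀ᶠ n in atTop, b n * (1 + ε * (-1) ^ n) = 0) :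
    ∃ (d : ℕ) (z : Fin d → Fin 2 → ℝ), (∀ i, z i ⬝ᵥ z i = 1) ∧ Function.Injective z ∧
      ∃ c : Fin d → ℝ, c ≠ 0 ∧ ∑ i, ∑ j, c i * c j * ∑' n, b n * (z i ⬝ᵥ z j) ^ n = 0 := by
  obtain ⟨N, hN⟩ := eventually_atTop.1 hvan
  obtain ⟨x, hinj, hunit, hpos⟩ := exists_injective_unit_fin_two (∑ n ∈ range N, 2 ^ n + 1)
  obtain ⟨c, hc0, hgram⟩ := exists_ne_zero_gramPowerForm_eq_zero x N (by simp)
  have hc : Fin.append c (ε • c) ≠ 0 := fun h =>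
    hc0 (funext fun i => by simpa using congrFun h (Fin.castAdd _ i))
  refine ⟨_, Fin.append x (-x), append_neg_dotProduct_self hunit, injective_append_neg hinj 0 hpos,
    _, hc, ?_⟩
  set F : ℝ → ℝ := fun t => ∑' n, b n * t ^ n
  have hF (i j : Fin _) : HasSum (fun n => b n * (1 + ε * (-1) ^ n) * (x i ⬝ᵥ x j) ^ n)
      (F (x i ⬝ᵥ x j) + ε * F (-(x i ⬝ᵥ x j))) := by
    have ht := abs_dotProduct_le_one (hunit i) (hunit j)
    have ht' : |-(x i ⬝ᵥ x j)| ≤ 1 := by rwa [abs_neg]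
    refine ((summable_mul_pow hsum ht).hasSum.add
      ((summable_mul_pow hsum ht').hasSum.mul_left ε)).congr_fun fun n => ?_
    rw [neg_pow]
    ring
  have hzero : HasSum (fun n => b n * (1 + ε * (-1) ^ n) * gramPowerForm c x n) 0 := by
    refine hasSum_zero.congr_fun fun n => ?_
    rcases lt_or_ge n N with hn | hn
    · rw [hgram n hn, mul_zero]
    · rw [hN n hn, zero_mul]
  refine (sum_sum_append_neg x c hε F).trans ?_
  rw [(hasSum_mul_gramPowerForm c hF).unique hzero, mul_zero]

end Necessity

/-- **Theorem 3 (Schoenberg–Gneiting criterion for strict positive definiteness on spheres).**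
Let `f : [−1,1] → ℝ` be given by `f(ρ) = ∑ₙ bₙ ρⁿ` with `bₙ ≥ 0` and `∑ₙ bₙ < ∞`.  Then the
kernel `K_f^{(n₀)}(x, x') = f(xᵀx')` on the unit sphere `S^{n₀−1}` is positive definite (i.e.
`∑_{i,j} cᵢ c_j f(zᵢᵀ z_j) > 0` for all pairwise distinct `z₁, …, z_d` on the sphere and all
`c ≠ 0`) for every `n₀ ≥ 1` if and only if `bₙ > 0` for infinitely many even `n` and for
infinitely many odd `n`. -/
theorem schoenberg_gneiting_positive_definite_on_spheres
    (b : ℕ → ℝ) (hb : ∀ n, 0 ≤ b n) (hsum : Summable b) :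
    (∀ n0 : ℕ, 1 ≤ n0 →
      ∀ (d : ℕ) (z : Fin d → Fin n0 → ℝ),
        (∀ i, ∑ l, z i l * z i l = 1) → Function.Injective z →
        ∀ c : Fin d → ℝ, c ≠ 0 →
          0 < ∑ i, ∑ j, c i * c j * ∑' n : ℕ, b n * (∑ l, z i l * z j l) ^ n)
    ↔ ({n : ℕ | Even n ∧ 0 < b n}.Infinite ∧ {n : ℕ | Odd n ∧ 0 < b n}.Infinite) := by
  refine ⟨fun H => ?_, fun ⟨heven, hodd⟩ _ _ _ _ hz hinj _ hc =>
    sum_sum_mul_mul_tsum_pos hb hsum heven hodd hz hinj hc⟩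
  have key (ε : ℝ) (hε : ε ^ 2 = 1) (hvan : ∀ᶠ n in atTop, b n * (1 + ε * (-1) ^ n) = 0) :
      False := by
    obtain ⟨d, z, hz, hinj, c, hc, h0⟩ := exists_sum_sum_mul_mul_tsum_eq_zero hsum hε hvan
    exact (H 2 one_le_two d z hz hinj c hc).ne' h0
  have hzero {p : ℕ → Prop} (hfin : ¬{n | p n ∧ 0 < b n}.Infinite) :
      ∀ᶠ n in atTop, p n → b n = 0 := by
    filter_upwards [not_frequently.1 (Nat.frequently_atTop_iff_infinite.not.2 hfin)] with n hn hpn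
    exact le_antisymm (not_lt.1 fun h => hn ⟨hpn, h⟩) (hb n)
  constructor
  · by_contra hfin
    refine key 1 (one_pow 2) ((hzero hfin).mono fun n hn => ?_)
    rcases Nat.even_or_odd n with he | ho
    · rw [hn he, zero_mul]
    · rw [ho.neg_one_pow]; ring
  · by_contra hfin
    refine key (-1) (by norm_num) ((hzero hfin).mono fun n hn => ?_)
    rcases Nat.even_or_odd n with he | ho
    · rw [he.neg_one_pow]; ring
    · rw [hn ho, zero_mul]
end

section
/- Kernel gradient descent with a positive definite kernel on a convex cost converges to the global infimum: let V be a finite-dimensional real inner product space, A : V → V a self-adjoint positive definite linear operator, and C : V → ℝ a convex differentiable function bounded from below. If v : [0,∞) → V is differentiable and satisfies v'(t) = −A∇C(v(t)) for all t ≥ 0, then C(v(t)) → inf_V C as t → ∞. -/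
open scoped RealInnerProductSpace Topology
open Filter Set

/-!
For every `w`, the function `t ↦ ⟪A⁻¹ (v t - w), v t - w⟫ + 2 t (C (v t) - C w)` is nonincreasing
along the flow `v' = -A ∇C(v)`: its derivative
`2 (C (v t) - C w - ⟪∇C (v t), v t - w⟫) - 2 t ⟪A ∇C (v t), ∇C (v t)⟫` is nonpositive by convexity
of `C` and positivity of `A`. Hence `C (v t) - C w ≤ ⟪A⁻¹ (v 0 - w), v 0 - w⟫ / (2 t)`, and letting
`t → ∞` and then `C w ↓ inf C` gives the limit. Here `A⁻¹` exists because a positive definite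
operator on a finite-dimensional space is injective.
-/

theorem antitoneOn_Ici_of_hasDerivAt_nonpos {f f' : ℝ → ℝ} {a : ℝ}
    (hf : ∀ t, a ≤ t → HasDerivAt f (f' t) t) (hf' : ∀ t, a ≤ t → f' t ≤ 0) :
    AntitoneOn f (Ici a) := by
  refine antitoneOn_of_hasDerivWithinAt_nonpos (f' := f') (convex_Ici a)
    (fun t ht => (hf t ht).continuousAt.continuousWithinAt) (fun t ht => ?_) fun t ht => ?_
  · rw [interior_Ici] at ht
    exact (hf t ht.le).hasDerivWithinAt
  · rw [interior_Ici] at ht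
    exact hf' t ht.le

theorem tendsto_ciInf_of_mul_sub_le {ι : Type*} [Nonempty ι] {C : ι → ℝ} {f : ℝ → ℝ}
    (hlow : ∀ t, ⨅ i, C i ≤ f t) (hrate : ∀ i, ∃ K, ∀ t, 0 < t → t * (f t - C i) ≤ K) :
    Tendsto f atTop (𝓝 (⨅ i, C i)) := by
  refine tendsto_order.2 ⟨fun a ha => .of_forall fun t => ha.trans_le (hlow t), fun a ha => ?_⟩
  obtain ⟨i, hi⟩ := exists_lt_of_ciInf_lt ha
  obtain ⟨K, hK⟩ := hrate i
  have hdecay : Tendsto (fun t : ℝ => K / t) atTop (𝓝 0) :=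
    tendsto_const_nhds.div_atTop tendsto_id
  have hbound : Tendsto (fun t => C i + K / t) atTop (𝓝 (C i)) := by
    simpa using hdecay.const_add (C i)
  filter_upwards [hbound.eventually (gt_mem_nhds hi), eventually_gt_atTop 0] with t hlt ht
  calc f t ≤ C i + K / t := by
        rw [← sub_le_iff_le_add', le_div_iff₀ ht, mul_comm]
        exact hK t ht
    _ < a := hlt

section

variable {V : Type*} [NormedAddCommGroup V] [InnerProductSpace ℝ V]

theorem HasGradientAt.comp_hasDerivAt [CompleteSpace V] {C : V → ℝ} {g : V} {x : ℝ → V}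
    {x' : V} {t : ℝ} (hC : HasGradientAt C g (x t)) (hx : HasDerivAt x x' t) :
    HasDerivAt (fun s => C (x s)) ⟪g, x'⟫ t := by
  have h := hC.hasFDerivAt.comp_hasDerivAt t hx
  rwa [InnerProductSpace.toDual_apply_apply] at h

theorem ConvexOn.sub_le_inner_gradient [CompleteSpace V] {C : V → ℝ}
    (hconv : ConvexOn ℝ univ C) {x : V} (hx : DifferentiableAt ℝ C x) (w : V) :
    C x - C w ≤ ⟪gradient C x, x - w⟫ := by
  set φ : ℝ → ℝ := fun s => C (AffineMap.lineMap x w s)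
  have hφ : ConvexOn ℝ univ φ := by
    have h := hconv.comp_affineMap (AffineMap.lineMap x w : ℝ →ᵃ[ℝ] V)
    rwa [preimage_univ] at h
  have hline : HasDerivAt (fun s : ℝ => AffineMap.lineMap x w s) (w - x) 0 := by
    simpa [AffineMap.lineMap_apply] using ((hasDerivAt_id (0 : ℝ)).smul_const (w - x)).add_const x
  have hgrad : HasGradientAt C (gradient C x) (AffineMap.lineMap x w (0 : ℝ)) := by
    rw [AffineMap.lineMap_apply_zero]
    exact hx.hasGradientAt
  have hφ' : HasDerivAt φ ⟪gradient C x, w - x⟫ 0 := hgrad.comp_hasDerivAt hline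
  have hslope := hφ.le_slope_of_hasDerivAt (mem_univ 0) (mem_univ 1) one_pos hφ'
  have hφ01 : slope φ 0 1 = C w - C x := by simp [φ, slope_def_field]
  rw [hφ01] at hslope
  rw [← neg_sub w x, inner_neg_right]
  linarith

theorem HasDerivAt.inner_map_self [FiniteDimensional ℝ V] {B : V →ₗ[ℝ] V} (hB : B.IsSymmetric)
    {x : ℝ → V} {x' : V} {t : ℝ} (hx : HasDerivAt x x' t) :
    HasDerivAt (fun s => ⟪B (x s), x s⟫) (2 * ⟪B (x t), x'⟫) t := by
  have hBx : HasDerivAt (fun s => B (x s)) (B x') t :=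
    B.toContinuousLinearMap.hasFDerivAt.comp_hasDerivAt t hx
  have h := hBx.inner ℝ hx
  have hsum : ⟪B (x t), x'⟫ + ⟪B x', x t⟫ = 2 * ⟪B (x t), x'⟫ := by
    rw [hB, real_inner_comm]
    ring
  rwa [hsum] at h

theorem ConvexOn.two_mul_sub_le_of_gradient_flow [FiniteDimensional ℝ V] {A : V ≃ₗ[ℝ] V}
    (hA : (A : V →ₗ[ℝ] V).IsPositive) {C : V → ℝ} (hconv : ConvexOn ℝ univ C)
    (hdiff : Differentiable ℝ C) {v : ℝ → V}
    (hv : ∀ t, 0 ≤ t → HasDerivAt v (-A (gradient C (v t))) t) (w : V) {t : ℝ} (ht : 0 ≤ t) :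
    2 * t * (C (v t) - C w) ≤ ⟪A.symm (v 0 - w), v 0 - w⟫ := by
  set L : ℝ → ℝ := fun s => ⟪A.symm (v s - w), v s - w⟫ + 2 * s * (C (v s) - C w)
  have hL : ∀ s, 0 ≤ s → HasDerivAt L (2 * (C (v s) - C w - ⟪gradient C (v s), v s - w⟫)
      - 2 * s * ⟪A (gradient C (v s)), gradient C (v s)⟫) s := by
    intro s hs
    have hquad := ((hv s hs).sub_const w).inner_map_self hA.isSymmetric.toLinearMap_symm
    have hCv := (hdiff (v s)).hasGradientAt.comp_hasDerivAt (hv s hs)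
    have h := hquad.add (((hasDerivAt_id s).const_mul 2).mul (hCv.sub_const (C w)))
    have hsymm : ⟪(A.symm : V →ₗ[ℝ] V) (v s - w), A (gradient C (v s))⟫
        = ⟪v s - w, gradient C (v s)⟫ := by
      have h := (hA.isSymmetric (A.symm (v s - w)) (gradient C (v s))).symm
      simpa only [LinearEquiv.coe_coe, LinearEquiv.apply_symm_apply] using h
    refine h.congr_deriv ?_
    simp only [inner_neg_right, hsymm, real_inner_comm (gradient C (v s)), id]
    ring
  have hanti : AntitoneOn L (Ici 0) := by
    refine antitoneOn_Ici_of_hasDerivAt_nonpos hL fun s hs => ?_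
    have hconvex := hconv.sub_le_inner_gradient (hdiff (v s)) w
    have hpos : 0 ≤ ⟪A (gradient C (v s)), gradient C (v s)⟫ := hA.inner_nonneg_left _
    nlinarith [mul_nonneg hs hpos]
  have hLt : L t ≤ L 0 := hanti self_mem_Ici ht ht
  have hnonneg : 0 ≤ ⟪A.symm (v t - w), v t - w⟫ := hA.toLinearMap_symm.inner_nonneg_left _
  simp only [L, mul_zero, zero_mul, add_zero] at hLt
  linarith

end

/-- **Kernel gradient descent with a positive definite kernel on a convex cost converges to
the global infimum.**  Let `V` be a finite-dimensional real inner product space, `A : V → V` a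
self-adjoint positive definite linear operator, and `C : V → ℝ` a convex differentiable
function bounded from below.  If `v` is differentiable with `v'(t) = −A ∇C(v(t))` for all
`t ≥ 0`, then `C(v(t)) → inf C` as `t → ∞`. -/
theorem kernel_gradient_descent_converges_to_infimum
    (V : Type) [NormedAddCommGroup V] [InnerProductSpace ℝ V] [FiniteDimensional ℝ V]
    (A : V →ₗ[ℝ] V)
    (hsa : ∀ u w : V, ⟪A u, w⟫ = ⟪u, A w⟫)
    (hpd : ∀ u : V, u ≠ 0 → 0 < ⟪A u, u⟫)
    (C : V → ℝ) (hconv : ConvexOn ℝ Set.univ C) (hdiff : Differentiable ℝ C)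
    (hbdd : BddBelow (Set.range C))
    (v : ℝ → V) (hv : ∀ t : ℝ, 0 ≤ t → HasDerivAt v (-(A (gradient C (v t)))) t) :
    Tendsto (fun t => C (v t)) atTop (nhds (⨅ w : V, C w)) := by
  have hinj : Function.Injective A :=
    (injective_iff_map_eq_zero A).2 fun u hu => by_contra fun h => (hpd u h).ne' (by simp [hu])
  set e := LinearEquiv.ofInjectiveEndo A hinj
  have he : (e : V →ₗ[ℝ] V).IsPositive := by
    refine ⟨hsa, fun u => ?_⟩
    rcases eq_or_ne u 0 with rfl | hu
    · simp
    · exact (hpd u hu).le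
  refine tendsto_ciInf_of_mul_sub_le (fun t => ciInf_le hbdd _) fun w =>
    ⟨⟪e.symm (v 0 - w), v 0 - w⟫ / 2, fun t ht => ?_⟩
  have hrate := hconv.two_mul_sub_le_of_gradient_flow he hdiff hv w ht.le
  linarith
end

section
/- Gradient descent on a linearly parametrized model is exactly kernel gradient descent with respect to the tangent kernel: fix a finite dataset x₁,…,x_N ∈ ℝ^{n₀}, functions f^(1),…,f^(P) from ℝ^{n₀} to ℝ^{n_L}, and the linear parametrization F^lin(θ) = (1/√P)Σ_{p=1}^P θ_p f^(p) for θ ∈ ℝ^P. Let C be a differentiable cost depending only on values at the dataset, with functional derivative at f represented by d|_f. If θ(t) satisfies the gradient flow ∂_t θ_p(t) = −∂_{θ_p}(C∘F^lin)(θ(t)), then f^lin_{θ(t)} := F^lin(θ(t)) satisfies, for every x ∈ ℝ^{n₀}, ∂_t f^lin_{θ(t)}(x) = −(1/N)Σ_{j=1}^N K̃(x,x_j) d|_{f^lin_{θ(t)}}(x_j), where K̃ is the tangent kernel K̃_{ii'}(x,x') = (1/P)Σ_{p=1}^P f^(p)_i(x) f^(p)_{i'}(x'). -/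
noncomputable section

/-- The linear parametrization `F^lin(θ) = (1/√P) ∑_p θ_p f^{(p)}`. -/
def linParam (P n0 nL : ℕ) (fs : Fin P → (Fin n0 → ℝ) → Fin nL → ℝ)
    (θ : Fin P → ℝ) (x : Fin n0 → ℝ) (k : Fin nL) : ℝ :=
  (Real.sqrt P)⁻¹ * ∑ p, θ p * fs p x k

/-- The tangent kernel `K̃_{ii'}(x,x') = (1/P) ∑_p f^{(p)}_i(x) f^{(p)}_{i'}(x')`. -/
def tangentKernel (P n0 nL : ℕ) (fs : Fin P → (Fin n0 → ℝ) → Fin nL → ℝ)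
    (x x' : Fin n0 → ℝ) (k k' : Fin nL) : ℝ :=
  (P : ℝ)⁻¹ * ∑ p, fs p x k * fs p x' k'

/-!
`F^lin` is linear in `θ`, so along the flow `∂_t F^lin(θ(t)) = F^lin(∂_t θ(t))`. By the chain rule
along the line `s ↦ F^lin(update θ p s)`, whose direction is `f^(p)/√P`, the partial derivative
`∂_{θ_p}(C ∘ F^lin)` is `⟨d|_f, f^(p)/√P⟩_{p^in}`: the parameter gradient is the adjoint of
`F^lin` applied to `d|_f`. Finally `F^lin` composed with its adjoint is the integral operator of
the tangent kernel against `p^in`, because the two factors `1/√P` combine into the `1/P` of `K̃`.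
-/

variable {P N n0 nL : ℕ} (fs : Fin P → (Fin n0 → ℝ) → Fin nL → ℝ)

theorem linParam_neg (θ : Fin P → ℝ) (x : Fin n0 → ℝ) (k : Fin nL) :
    linParam P n0 nL fs (-θ) x k = -linParam P n0 nL fs θ x k := by
  simp only [linParam, Pi.neg_apply, neg_mul, Finset.sum_neg_distrib, mul_neg]

theorem linParam_update (θ : Fin P → ℝ) (p : Fin P) (s : ℝ) (x : Fin n0 → ℝ) (k : Fin nL) :
    linParam P n0 nL fs (Function.update θ p s) x k
      = linParam P n0 nL fs θ x k + (s - θ p) * ((Real.sqrt P)⁻¹ * fs p x k) := by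
  have hterm : ∀ q, Function.update θ p s q * fs q x k
      = θ q * fs q x k + if q = p then (s - θ p) * fs p x k else 0 := by
    intro q
    rw [Function.update_apply]
    split_ifs with hq
    · rw [hq]
      ring
    · ring
  have hsum : ∑ q, Function.update θ p s q * fs q x k
      = ∑ q, θ q * fs q x k + (s - θ p) * fs p x k := by
    simp only [hterm, Finset.sum_add_distrib, Finset.sum_ite_eq', Finset.mem_univ, if_true]
  simp only [linParam, hsum]
  ring

theorem hasDerivAt_linParam {θ : ℝ → Fin P → ℝ} {θ' : Fin P → ℝ} {t : ℝ}
    (hθ : ∀ p, HasDerivAt (fun s => θ s p) (θ' p) t) (x : Fin n0 → ℝ) (k : Fin nL) :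
    HasDerivAt (fun s => linParam P n0 nL fs (θ s) x k) (linParam P n0 nL fs θ' x k) t :=
  (HasDerivAt.fun_sum fun p _ => (hθ p).mul_const (fs p x k)).const_mul _

/-- The adjoint of `θ ↦ F^lin(θ)` restricted to the dataset, for the pairing `⟨·,·⟩_{p^in}`. -/
def linParamAdjoint (xs : Fin N → Fin n0 → ℝ) (c : Fin N → Fin nL → ℝ) (p : Fin P) : ℝ :=
  (Real.sqrt P)⁻¹ * ((N : ℝ)⁻¹ * ∑ i, ∑ k, c i k * fs p (xs i) k)

theorem linParam_linParamAdjoint (xs : Fin N → Fin n0 → ℝ) (c : Fin N → Fin nL → ℝ)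
    (x : Fin n0 → ℝ) (k : Fin nL) :
    linParam P n0 nL fs (linParamAdjoint fs xs c) x k
      = (N : ℝ)⁻¹ * ∑ j, ∑ k', tangentKernel P n0 nL fs x (xs j) k k' * c j k' := by
  have hsqrt : (Real.sqrt P)⁻¹ * (Real.sqrt P)⁻¹ = (P : ℝ)⁻¹ := by
    rw [← mul_inv, Real.mul_self_sqrt (Nat.cast_nonneg P)]
  simp only [linParam, linParamAdjoint, tangentKernel, Finset.mul_sum, Finset.sum_mul]
  rw [Finset.sum_comm]
  refine Finset.sum_congr rfl fun j _ => ?_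
  rw [Finset.sum_comm]
  refine Finset.sum_congr rfl fun k' _ => Finset.sum_congr rfl fun p _ => ?_
  rw [← hsqrt]
  ring

theorem hasDerivAt_cost_linParam_update (xs : Fin N → Fin n0 → ℝ)
    (C : (Fin N → Fin nL → ℝ) → ℝ) (dC : (Fin N → Fin nL → ℝ) → Fin N → Fin nL → ℝ)
    (hdC : ∀ f g : Fin N → Fin nL → ℝ,
      HasDerivAt (fun s : ℝ => C (f + s • g)) ((N : ℝ)⁻¹ * ∑ i, ∑ k, dC f i k * g i k) 0)
    (θ : Fin P → ℝ) (p : Fin P) :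
    HasDerivAt (fun s => C (fun i k => linParam P n0 nL fs (Function.update θ p s) (xs i) k))
      (linParamAdjoint fs xs (dC fun i k => linParam P n0 nL fs θ (xs i) k) p) (θ p) := by
  set f : Fin N → Fin nL → ℝ := fun i k => linParam P n0 nL fs θ (xs i) k
  set g : Fin N → Fin nL → ℝ := fun i k => (Real.sqrt P)⁻¹ * fs p (xs i) k
  have hline : (fun s => C (fun i k => linParam P n0 nL fs (Function.update θ p s) (xs i) k))
      = fun s => C (f + (s - θ p) • g) := by
    funext s
    congr 1
    funext i k
    simp only [linParam_update, Pi.add_apply, Pi.smul_apply, smul_eq_mul, f, g]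
  have hdir := HasDerivAt.comp_sub_const (θ p) (θ p) (by simpa only [sub_self] using hdC f g)
  have hvalue : (N : ℝ)⁻¹ * ∑ i, ∑ k, dC f i k * g i k = linParamAdjoint fs xs (dC f) p := by
    simp only [linParamAdjoint, Finset.mul_sum, g]
    refine Finset.sum_congr rfl fun i _ => Finset.sum_congr rfl fun k _ => ?_
    ring
  rw [hline, ← hvalue]
  exact hdir

theorem linear_parametrization_is_kernel_gradient_descent_general
    (N n0 nL P : ℕ)
    (xs : Fin N → Fin n0 → ℝ)
    (fs : Fin P → (Fin n0 → ℝ) → Fin nL → ℝ)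
    (C : (Fin N → Fin nL → ℝ) → ℝ)
    (dC : (Fin N → Fin nL → ℝ) → Fin N → Fin nL → ℝ)
    (hdC : ∀ f g : Fin N → Fin nL → ℝ,
      HasDerivAt (fun s : ℝ => C (f + s • g)) ((N : ℝ)⁻¹ * ∑ i, ∑ k, dC f i k * g i k) 0)
    (θ : ℝ → Fin P → ℝ)
    -- gradient flow on the parameters: `∂_t θ_p(t) = −∂_{θ_p}(C ∘ F^lin)(θ(t))`
    (hθ : ∀ t p, HasDerivAt (fun s => θ s p)
      (-(deriv (fun s : ℝ =>
          C (fun i k => linParam P n0 nL fs (Function.update (θ t) p s) (xs i) k))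
        (θ t p))) t) :
    ∀ (t : ℝ) (x : Fin n0 → ℝ) (k : Fin nL),
      HasDerivAt (fun s => linParam P n0 nL fs (θ s) x k)
        (-((N : ℝ)⁻¹ * ∑ j, ∑ k', tangentKernel P n0 nL fs x (xs j) k k' *
            dC (fun i k'' => linParam P n0 nL fs (θ t) (xs i) k'') j k')) t := by
  intro t x k
  set f : Fin N → Fin nL → ℝ := fun i k => linParam P n0 nL fs (θ t) (xs i) k
  have hflow : ∀ p, HasDerivAt (fun s => θ s p) ((-linParamAdjoint fs xs (dC f)) p) t := by
    intro p
    simpa only [(hasDerivAt_cost_linParam_update fs xs C dC hdC (θ t) p).deriv,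
      Pi.neg_apply] using hθ t p
  have hval := hasDerivAt_linParam fs hflow x k
  rwa [linParam_neg, linParam_linParamAdjoint] at hval

/-- **Gradient descent on a linearly parametrized model is kernel gradient descent with
respect to the tangent kernel.**  Fix a finite dataset `x₁, …, x_N`, functions
`f^{(1)}, …, f^{(P)}`, and the linear parametrization `F^lin(θ) = (1/√P) ∑_p θ_p f^{(p)}`.
Let `C` be a differentiable cost depending only on the values at the dataset, with functional
derivative at `f` represented by `dC f` (i.e. the directional derivative of `C` at `f` in
direction `g` is `(1/N) ∑ᵢ (dC f)(xᵢ)ᵀ g(xᵢ)`).  If `θ(t)` follows the gradient flow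
`∂_t θ_p(t) = −∂_{θ_p}(C ∘ F^lin)(θ(t))`, then for every input `x`,
`∂_t F^lin(θ(t))(x) = −(1/N) ∑_j K̃(x, x_j) (dC (F^lin(θ(t))|dataset))(x_j)`. -/
theorem linear_parametrization_is_kernel_gradient_descent
    (N n0 nL P : ℕ) (hN : 0 < N) (hP : 0 < P)
    (xs : Fin N → Fin n0 → ℝ)
    (fs : Fin P → (Fin n0 → ℝ) → Fin nL → ℝ)
    (C : (Fin N → Fin nL → ℝ) → ℝ) (hC : Differentiable ℝ C)
    (dC : (Fin N → Fin nL → ℝ) → Fin N → Fin nL → ℝ)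
    (hdC : ∀ f g : Fin N → Fin nL → ℝ,
      HasDerivAt (fun s : ℝ => C (f + s • g)) ((N : ℝ)⁻¹ * ∑ i, ∑ k, dC f i k * g i k) 0)
    (θ : ℝ → Fin P → ℝ)
    -- gradient flow on the parameters: `∂_t θ_p(t) = −∂_{θ_p}(C ∘ F^lin)(θ(t))`
    (hθ : ∀ t p, HasDerivAt (fun s => θ s p)
      (-(deriv (fun s : ℝ =>
          C (fun i k => linParam P n0 nL fs (Function.update (θ t) p s) (xs i) k))
        (θ t p))) t) :
    ∀ (t : ℝ) (x : Fin n0 → ℝ) (k : Fin nL),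
      HasDerivAt (fun s => linParam P n0 nL fs (θ s) x k)
        (-((N : ℝ)⁻¹ * ∑ j, ∑ k', tangentKernel P n0 nL fs x (xs j) k k' *
            dC (fun i k'' => linParam P n0 nL fs (θ t) (xs i) k'') j k')) t :=
  linear_parametrization_is_kernel_gradient_descent_general N n0 nL P xs fs C dC hdC θ hθ

end
end

section
/- Positivity of all power-series coefficients after an affine reparametrization: let (b_i)_{i≥0} be nonnegative reals with Σ_{i=0}^∞ b_i < ∞ and with b_i > 0 for infinitely many i, let s > 0, and define ν : [−1,1] → ℝ by ν(ρ) = β² + Σ_{i=0}^∞ b_i ((s+ρ)/(s+1))^i, where β ∈ ℝ. Then ν admits a power series expansion ν(ρ) = Σ_{n=0}^∞ c_n ρ^n converging on [−1,1], with c_n = Σ_{i≥n} b_i · binom(i,n) · s^{i−n}/(s+1)^i > 0 for every n ≥ 0 — in particular c_n > 0 for infinitely many even n and infinitely many odd n. -/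
noncomputable section

/-- The `n`-th coefficient of the power-series expansion (in `ρ`) of
`ρ ↦ ∑ᵢ bᵢ ((s+ρ)/(s+1))ⁱ` : `c_n = ∑_{i ≥ n} bᵢ (i choose n) s^{i−n} / (s+1)ⁱ`
(the binomial coefficient vanishes for `i < n`, so the sum may run over all `i`). -/
def affineCoeff (b : ℕ → ℝ) (s : ℝ) (n : ℕ) : ℝ :=
  ∑' i : ℕ, b i * (i.choose n : ℝ) * s ^ (i - n) / (s + 1) ^ i

/-- **Positivity of all power-series coefficients after an affine reparametrization.**
Let `(bᵢ)` be nonnegative reals with `∑ bᵢ < ∞` and `bᵢ > 0` for infinitely many `i`, let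
`s > 0`, and define `ν(ρ) = β² + ∑ᵢ bᵢ ((s+ρ)/(s+1))ⁱ`.  Then `ν` admits a power series
expansion in `ρ` converging on `[−1,1]`, with coefficients
`c_n = ∑_{i ≥ n} bᵢ (i choose n) s^{i−n}/(s+1)ⁱ > 0` for every `n` (the constant term being
`β² + c₀`) — in particular `c_n > 0` for infinitely many even `n` and infinitely many odd
`n`. -/
theorem affine_reparametrization_positive_coefficients
    (b : ℕ → ℝ) (hb : ∀ i, 0 ≤ b i) (hsum : Summable b)
    (hinf : {i : ℕ | 0 < b i}.Infinite)
    (s : ℝ) (hs : 0 < s) (β : ℝ) :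
    (∀ n : ℕ, 0 < affineCoeff b s n)
    ∧ (∀ ρ ∈ Set.Icc (-1 : ℝ) 1,
        HasSum (fun n : ℕ => affineCoeff b s n * ρ ^ n)
          ((β ^ 2 + ∑' i : ℕ, b i * ((s + ρ) / (s + 1)) ^ i) - β ^ 2))
    ∧ ({n : ℕ | Even n ∧ 0 < affineCoeff b s n}.Infinite
        ∧ {n : ℕ | Odd n ∧ 0 < affineCoeff b s n}.Infinite) := by
  have hs1 : (0:ℝ) < s + 1 := by linarith
  -- the "master" nonnegative array
  set H : ℕ × ℕ → ℝ := fun p => b p.1 * (p.1.choose p.2 : ℝ) * s ^ (p.1 - p.2) / (s + 1) ^ p.1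
    with hHdef
  have hHnn : ∀ p, 0 ≤ H p := by
    intro p
    apply div_nonneg _ (by positivity)
    exact mul_nonneg (mul_nonneg (hb _) (by positivity)) (by positivity)
  -- each row has finite support and sums to `b i`
  have hHrow : ∀ i : ℕ, HasSum (fun n => H (i, n)) (b i) := by
    intro i
    have hzero : ∀ n ∉ Finset.range (i + 1), H (i, n) = 0 := by
      intro n hn
      have : i < n := by simpa using hn
      simp [hHdef, Nat.choose_eq_zero_of_lt this]
    have hsumeq : (∑ n ∈ Finset.range (i + 1), H (i, n)) = b i := by
      have hbin : ((1:ℝ) + s) ^ i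
          = ∑ n ∈ Finset.range (i + 1), s ^ (i - n) * (i.choose n : ℝ) := by
        rw [add_pow]; simp [one_pow]
      have hne : (s + 1 : ℝ) ^ i ≠ 0 := by positivity
      calc (∑ n ∈ Finset.range (i + 1), H (i, n))
          = (∑ n ∈ Finset.range (i + 1), b i * ((i.choose n : ℝ) * s ^ (i - n))) / (s+1)^i := by
            rw [Finset.sum_div]; apply Finset.sum_congr rfl; intro n _
            simp [hHdef]; ring
        _ = b i * ((1 + s) ^ i) / (s+1)^i := by
            rw [← Finset.mul_sum, hbin]; congr 2
            apply Finset.sum_congr rfl; intro n _; ring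
        _ = b i := by rw [add_comm (1:ℝ) s]; field_simp
    simpa [hsumeq] using hasSum_sum_of_ne_finset_zero hzero
  have hH : Summable H := by
    rw [summable_prod_of_nonneg hHnn]
    constructor
    · exact fun i => (hHrow i).summable
    · have : (fun i => ∑' n, H (i, n)) = b := by
        funext i; exact (hHrow i).tsum_eq
      rw [this]; exact hsum
  -- summability of the columns of H
  have hHcol : ∀ n : ℕ, Summable (fun i => H (i, n)) := by
    intro n
    exact hH.comp_injective (fun i j h => by simpa using congrArg Prod.fst h :
      Function.Injective fun i : ℕ => (i, n))
  have hpos : ∀ n : ℕ, 0 < affineCoeff b s n := by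
    intro n
    have hcoeff : affineCoeff b s n = ∑' i, H (i, n) := rfl
    obtain ⟨i, hiS, hni⟩ := hinf.exists_gt n
    rw [hcoeff]
    refine Summable.tsum_pos (hHcol n) (fun i => hHnn (i, n)) i ?_
    have hchoose : 0 < (i.choose n : ℝ) := by
      exact_mod_cast Nat.choose_pos (le_of_lt hni)
    have hbi : 0 < b i := hiS
    simp only [hHdef]
    positivity
  refine ⟨hpos, ?_, ?_⟩
  · -- convergence of the power series on [-1,1]
    intro ρ hρ
    have hρabs : |ρ| ≤ 1 := abs_le.mpr ⟨hρ.1, hρ.2⟩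
    set G : ℕ × ℕ → ℝ := fun p => H p * ρ ^ p.2 with hGdef
    have hG : Summable G := by
      apply Summable.of_abs
      apply hH.of_nonneg_of_le (fun p => abs_nonneg _)
      intro p
      rw [hGdef]
      calc |H p * ρ ^ p.2| = H p * |ρ| ^ p.2 := by
            rw [abs_mul, abs_of_nonneg (hHnn p), abs_pow]
        _ ≤ H p * 1 := by
            exact mul_le_mul_of_nonneg_left (pow_le_one₀ (abs_nonneg _) hρabs) (hHnn p)
        _ = H p := mul_one _
    -- rows of G sum to b i * ((s+ρ)/(s+1))^i
    have hGrow : ∀ i : ℕ, HasSum (fun n => G (i, n)) (b i * ((s + ρ) / (s + 1)) ^ i) := by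
      intro i
      have hzero : ∀ n ∉ Finset.range (i + 1), G (i, n) = 0 := by
        intro n hn
        have : i < n := by simpa using hn
        simp [hGdef, hHdef, Nat.choose_eq_zero_of_lt this]
      have hbin : (ρ + s) ^ i
          = ∑ n ∈ Finset.range (i + 1), ρ ^ n * s ^ (i - n) * (i.choose n : ℝ) :=
        add_pow ρ s i
      have hne : (s + 1 : ℝ) ^ i ≠ 0 := by positivity
      have hsumeq : (∑ n ∈ Finset.range (i + 1), G (i, n))
          = b i * ((s + ρ) / (s + 1)) ^ i := by
        calc (∑ n ∈ Finset.range (i + 1), G (i, n))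
            = (∑ n ∈ Finset.range (i + 1),
                b i * (ρ ^ n * s ^ (i - n) * (i.choose n : ℝ))) / (s+1)^i := by
              rw [Finset.sum_div]; apply Finset.sum_congr rfl; intro n _
              simp [hGdef, hHdef]; ring
          _ = b i * (ρ + s) ^ i / (s+1)^i := by rw [← Finset.mul_sum, hbin]
          _ = b i * ((s + ρ) / (s + 1)) ^ i := by
              rw [div_pow, add_comm ρ s]; ring
      simpa [hsumeq] using hasSum_sum_of_ne_finset_zero hzero
    have hGsum : HasSum G (∑' p, G p) := hG.hasSum
    have hT : HasSum (fun i => b i * ((s + ρ) / (s + 1)) ^ i) (∑' p, G p) :=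
      hGsum.prod_fiberwise hGrow
    -- F is G with coordinates swapped
    have hF : HasSum (fun p : ℕ × ℕ => G (p.2, p.1)) (∑' p, G p) := by
      have := (Equiv.prodComm ℕ ℕ).hasSum_iff (f := G) (a := ∑' p, G p)
      exact this.mpr hGsum
    -- columns of G (rows of F) sum to the coefficients times ρ^n
    have hFrow : ∀ n : ℕ, HasSum (fun i => G (i, n)) (affineCoeff b s n * ρ ^ n) := by
      intro n
      have hsummable : Summable (fun i => G (i, n)) :=
        hG.comp_injective (fun i j h => by simpa using congrArg Prod.fst h :
          Function.Injective fun i : ℕ => (i, n))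
      have : (∑' i, G (i, n)) = affineCoeff b s n * ρ ^ n := by
        simp only [hGdef]
        rw [tsum_mul_right]; rfl
      simpa [this] using hsummable.hasSum
    have hmain : HasSum (fun n : ℕ => affineCoeff b s n * ρ ^ n) (∑' p, G p) :=
      hF.prod_fiberwise hFrow
    have hTeq : (∑' i : ℕ, b i * ((s + ρ) / (s + 1)) ^ i) = ∑' p, G p := hT.tsum_eq
    rw [add_sub_cancel_left, hTeq]
    exact hmain
  · constructor
    · apply Set.infinite_of_injective_forall_mem (f := fun k : ℕ => 2 * k)
      · intro a b h; simp only at h; omega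
      · intro k; exact ⟨⟨k, (two_mul k).symm ▸ by ring⟩, hpos _⟩
    · apply Set.infinite_of_injective_forall_mem (f := fun k : ℕ => 2 * k + 1)
      · intro a b h; simp only at h; omega
      · intro k; exact ⟨⟨k, by ring⟩, hpos _⟩

end
end
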